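/- Finite generating set for the saturated semigroup: Let p_1,…,p_n ∈ ℕ^d and let Γ ⊆ ℕ^d be the additive submonoid they generate. Assume that for each coordinate i ∈ {1,…,d} there is a nonzero element of Γ supported on the i-th coordinate axis, and let b_i be the minimal i-th coordinate of such an element; let c_i := max_{1≤j≤n} (p_j)_i, and let B := { γ ∈ ℕ^d : γ_i < b_i + c_i for all i }. Let S := { γ ∈ ℕ^d : for every K ⊆ {1,…,n} with γ ∉ N(p_i | i ∈ K), γ lies in the subgroup of ℤ^d generated by {p_i | i ∉ K} }. Then every element of S is a finite sum of elements of S ∩ B; i.e., S is contained in the additive submonoid of ℕ^d generated by the finite set S ∩ B. (By the main theorem, S is the semigroup Γ^s of the Lipschitz saturation, so S ∩ B is a finite generating system for Γ^s.) -/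

import Mathlib

/-! Let `γ ∈ S` leave the box `B` in coordinate `i`, i.e. `b i + c i ≤ γ i`, and let
`β := b i • eᵢ`, an element of `Γ` lying in `S ∩ B`.  Lowering the `i`-th coordinate of a point
as long as it stays `≥ c i` does not leave any Newton polyhedron of the `p j`; hence for every
`K` with `γ - β ∉ N(p_j | j ∈ K)` also `γ ∉ N(p_j | j ∈ K)`.  Then `γ`, and `β` (a sum of
generators `p j ≤ γ`, none of which can have `j ∈ K`), lie in the group generated by the `p j`
with `j ∉ K`, and so does `γ - β`.  Thus `γ - β ∈ S`, and well-founded induction on `γ` in the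
componentwise order finishes the proof. -/

section NewtonPolyhedron

variable {ι σ : Type*}

def newtonPolyhedron (p : ι → σ → ℝ) (K : Finset ι) : Set (σ → ℝ) :=
  convexHull ℝ (⋃ k ∈ K, {x | ∀ j, p k j ≤ x j})

variable {p : ι → σ → ℝ} {K : Finset ι}

lemma mem_newtonPolyhedron_of_le {k : ι} (hk : k ∈ K) {x : σ → ℝ} (hle : p k ≤ x) :
    x ∈ newtonPolyhedron p K :=
  subset_convexHull ℝ _ (Set.mem_biUnion hk hle)

lemma update_mem_newtonPolyhedron [DecidableEq σ] {x : σ → ℝ} (hx : x ∈ newtonPolyhedron p K)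
    {i : σ} {t : ℝ} (ht : ∀ k ∈ K, p k i ≤ t) :
    Function.update x i t ∈ newtonPolyhedron p K := by
  suffices hsub : newtonPolyhedron p K ⊆ {y | Function.update y i t ∈ newtonPolyhedron p K} from
    hsub hx
  refine convexHull_min ?_ ?_
  · simp only [Set.iUnion_subset_iff]
    intro k hk y hy
    refine mem_newtonPolyhedron_of_le hk fun j => ?_
    rcases eq_or_ne j i with rfl | hj
    · simpa using ht k hk
    · simpa [hj] using hy j
  · intro y hy z hz a b ha hb hab
    have hupdate : Function.update (a • y + b • z) i t =
        a • Function.update y i t + b • Function.update z i t := by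
      rw [← Function.update_smul, ← Function.update_smul, ← Function.update_add, ← add_smul, hab,
        one_smul]
    show Function.update (a • y + b • z) i t ∈ newtonPolyhedron p K
    rw [hupdate]
    exact convex_convexHull ℝ _ hy hz ha hb hab

end NewtonPolyhedron

lemma single_le_iff_le_apply {σ : Type*} [DecidableEq σ] {i : σ} {a : ℕ} {f : σ → ℕ} :
    Pi.single i a ≤ f ↔ a ≤ f i := by
  refine ⟨fun h => by simpa using h i, fun h j => ?_⟩
  rcases eq_or_ne j i with rfl | hj
  · simpa using h
  · simp [hj]

section Saturation

variable {ι σ : Type*} (p : ι → σ → ℕ)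

def saturation : Set (σ → ℕ) :=
  {γ | ∀ K : Finset ι, (fun j => (γ j : ℝ)) ∉ newtonPolyhedron (fun k j => (p k j : ℝ)) K →
    (fun j => (γ j : ℤ)) ∈ AddSubgroup.closure {x | ∃ k ∉ K, x = fun j => (p k j : ℤ)}}

variable {p}

/-- Only generators `p k ≤ γ` can occur in a decomposition of `β ≤ γ`, and `p k ≤ γ` with `k ∈ K`
would put `γ` into the Newton polyhedron of `K`. -/
lemma natCast_mem_closure_of_le_of_notMem_newtonPolyhedron {K : Finset ι} {β γ : σ → ℕ}
    (hβ : β ∈ AddSubmonoid.closure (Set.range p)) (hle : β ≤ γ)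
    (hγ : (fun j => (γ j : ℝ)) ∉ newtonPolyhedron (fun k j => (p k j : ℝ)) K) :
    (fun j => (β j : ℤ)) ∈ AddSubgroup.closure {x | ∃ k ∉ K, x = fun j => (p k j : ℤ)} := by
  induction hβ using AddSubmonoid.closure_induction with
  | mem x hx =>
    obtain ⟨k, rfl⟩ := hx
    refine AddSubgroup.subset_closure ⟨k, fun hk => hγ ?_, rfl⟩
    exact mem_newtonPolyhedron_of_le hk fun j => Nat.cast_le.mpr (hle j)
  | zero => exact zero_mem _
  | add x y _ _ ihx ihy =>
    have hsum : (fun j => ((x + y) j : ℤ)) = (fun j => (x j : ℤ)) + fun j => (y j : ℤ) := by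
      ext j; simp
    rw [hsum]
    exact add_mem (ihx (le_trans le_self_add hle)) (ihy (le_trans le_add_self hle))

lemma closure_range_subset_saturation :
    (AddSubmonoid.closure (Set.range p) : Set (σ → ℕ)) ⊆ saturation p :=
  fun _ hβ _ hK => natCast_mem_closure_of_le_of_notMem_newtonPolyhedron hβ le_rfl hK

lemma sub_single_mem_saturation [DecidableEq σ] {γ : σ → ℕ} (hγ : γ ∈ saturation p) {i : σ}
    {e c : ℕ} (he : Pi.single i e ∈ AddSubmonoid.closure (Set.range p)) (hc : ∀ k, p k i ≤ c)
    (hi : e + c ≤ γ i) :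
    γ - Pi.single i e ∈ saturation p := by
  have hle : Pi.single i e ≤ γ := single_le_iff_le_apply.mpr (le_of_add_le_left hi)
  intro K hK
  have hγK : (fun j => (γ j : ℝ)) ∉ newtonPolyhedron (fun k j => (p k j : ℝ)) K := by
    intro hγK
    refine hK ?_
    convert update_mem_newtonPolyhedron hγK (i := i) (t := ((γ i - e : ℕ) : ℝ)) ?_ using 1
    · ext j
      rcases eq_or_ne j i with rfl | hj <;> simp [*]
    · intro k _
      exact_mod_cast (show p k i ≤ γ i - e by have := hc k; omega)
  have hcast : (fun j => ((γ - Pi.single i e : σ → ℕ) j : ℤ)) =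
      (fun j => (γ j : ℤ)) - fun j => ((Pi.single i e : σ → ℕ) j : ℤ) := by
    ext j; simp [Nat.cast_sub (hle j)]
  rw [hcast]
  exact sub_mem (hγ K hγK) (natCast_mem_closure_of_le_of_notMem_newtonPolyhedron he hle hγK)

lemma exists_pos_apply_of_mem_closure {γ : σ → ℕ} (hγ : γ ∈ AddSubmonoid.closure (Set.range p))
    {i : σ} (hi : 0 < γ i) : ∃ k, 0 < p k i := by
  by_contra! h
  have hle : AddSubmonoid.closure (Set.range p) ≤ AddMonoidHom.mker (Pi.evalAddMonoidHom _ i) :=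
    AddSubmonoid.closure_le.mpr <| by rintro _ ⟨k, rfl⟩; exact Nat.le_zero.mp (h k)
  exact hi.ne' (hle hγ)

end Saturation

lemma pos_and_single_mem_of_eq_sInf {σ : Type*} [DecidableEq σ] {Γ : AddSubmonoid (σ → ℕ)}
    {i : σ} (h : ∃ γ ∈ Γ, γ ≠ 0 ∧ ∀ j, j ≠ i → γ j = 0) {b : ℕ}
    (hb : b = sInf {e : ℕ | ∃ γ ∈ Γ, γ ≠ 0 ∧ (∀ j, j ≠ i → γ j = 0) ∧ γ i = e}) :
    0 < b ∧ Pi.single i b ∈ Γ := by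
  obtain ⟨γ, hγ, hγ0, hsupp⟩ := h
  obtain ⟨β, hβ, hβ0, hβsupp, hβi⟩ :=
    hb ▸ Nat.sInf_mem (s := {e : ℕ | ∃ γ ∈ Γ, γ ≠ 0 ∧ (∀ j, j ≠ i → γ j = 0) ∧ γ i = e})
      ⟨γ i, γ, hγ, hγ0, hsupp, rfl⟩
  have hβ_eq : β = Pi.single i b := by
    ext j
    rcases eq_or_ne j i with rfl | hj
    · simpa using hβi
    · simp [hj, hβsupp j hj]
  subst hβ_eq
  exact ⟨Nat.pos_of_ne_zero (Pi.single_ne_zero_iff.mp hβ0), hβ⟩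

lemma AddSubmonoid.subset_closure_inter_of_exists_add {M : Type*} [AddMonoid M] [Preorder M]
    [WellFoundedLT M] {S B : Set M}
    (h : ∀ γ ∈ S, γ ∉ B → ∃ δ ∈ S, δ < γ ∧ ∃ β ∈ S ∩ B, γ = δ + β) :
    S ⊆ AddSubmonoid.closure (S ∩ B) := by
  intro γ
  induction γ using WellFoundedLT.induction with
  | _ γ ih =>
    intro hγ
    by_cases hγB : γ ∈ B
    · exact subset_closure ⟨hγ, hγB⟩
    obtain ⟨δ, hδ, hδγ, β, hβ, rfl⟩ := h γ hγ hγB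
    exact add_mem (ih δ hδγ hδ) (subset_closure hβ)

/-- **Finite generating set for the saturated semigroup.**
Let `Γ ⊆ ℕ^d` be the submonoid generated by `p 1, …, p n`, and assume every
coordinate axis contains a nonzero element of `Γ`.  With `b i` the minimal `i`-th
coordinate of a nonzero element of `Γ` supported on the `i`-th axis and
`c i := max_j (p j) i`, set `B := {γ | ∀ i, γ i < b i + c i}` and let `S` be the set
of `γ ∈ ℕ^d` satisfying the saturation condition of the main theorem.  Then `S` is
contained in the submonoid of `ℕ^d` generated by `S ∩ B`. -/
theorem saturated_semigroup_finite_generation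
    {d n : ℕ} (p : Fin n → (Fin d → ℕ))
    (Γ : AddSubmonoid (Fin d → ℕ)) (hΓ : Γ = AddSubmonoid.closure (Set.range p))
    (haxis : ∀ i : Fin d, ∃ γ ∈ Γ, γ ≠ 0 ∧ ∀ j, j ≠ i → γ j = 0)
    (b c : Fin d → ℕ)
    (hb : ∀ i, b i = sInf {e : ℕ | ∃ γ ∈ Γ, γ ≠ 0 ∧ (∀ j, j ≠ i → γ j = 0) ∧ γ i = e})
    (hc : ∀ i, c i = Finset.univ.sup (fun j : Fin n => p j i))
    (B S : Set (Fin d → ℕ))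
    (hB : B = {γ : Fin d → ℕ | ∀ i, γ i < b i + c i})
    (hS : S = {γ : Fin d → ℕ | ∀ K : Finset (Fin n),
        (fun j => (γ j : ℝ)) ∉
            convexHull ℝ (⋃ i ∈ K, {x : Fin d → ℝ | ∀ j, (p i j : ℝ) ≤ x j}) →
        (fun j => (γ j : ℤ)) ∈
          AddSubgroup.closure {x : Fin d → ℤ | ∃ i ∉ K, x = fun j => (p i j : ℤ)}}) :
    S ⊆ (AddSubmonoid.closure (S ∩ B) : Set (Fin d → ℕ)) := by
  change S = saturation p at hS
  subst hΓ hB hS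
  have hsingle i := pos_and_single_mem_of_eq_sInf (haxis i) (hb i)
  have hle_c i k : p k i ≤ c i := hc i ▸ Finset.le_sup (f := fun k => p k i) (Finset.mem_univ k)
  have hc_pos i : 0 < c i := by
    obtain ⟨k, hk⟩ :=
      exists_pos_apply_of_mem_closure (hsingle i).2 (i := i) (by simpa using (hsingle i).1)
    exact hk.trans_le (hle_c i k)
  refine AddSubmonoid.subset_closure_inter_of_exists_add fun γ hγ hγB => ?_
  obtain ⟨i, hi⟩ : ∃ i, b i + c i ≤ γ i := by simpa using hγB
  set β : Fin d → ℕ := Pi.single i (b i)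
  have hβB : β ∈ {γ : Fin d → ℕ | ∀ i, γ i < b i + c i} := by
    intro j
    rcases eq_or_ne j i with rfl | hj
    · simpa [β] using hc_pos j
    · simpa [β, hj] using (hsingle j).1.trans_le le_self_add
  have hβle : β ≤ γ := single_le_iff_le_apply.mpr (le_of_add_le_left hi)
  have hβ_pos : 0 < β := pos_iff_ne_zero.mpr (Pi.single_ne_zero_iff.mpr (hsingle i).1.ne')
  refine ⟨γ - β, sub_single_mem_saturation hγ (hsingle i).2 (hle_c i) hi, ?_,
    β, ⟨closure_range_subset_saturation (hsingle i).2, hβB⟩, (tsub_add_cancel_of_le hβle).symm⟩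
  simpa [tsub_add_cancel_of_le hβle] using lt_add_of_pos_right (γ - β) hβ_pos
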